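/- arXiv:1808.01832 — 3 statements merged into one kernel-verified Lean document; each statement's English description precedes it below -/
import Mathlib

section
/- For all u, v in the open first quadrant Q with u ≠ v one has E₁(u, −conj(v)) · conj( E₁(u, v) ) = 1; consequently arg E₁(u, −conj(v)) = arg E₁(u, v), i.e. the angle map ψ_{S₁} is invariant under reflecting its second variable across the imaginary axis. (This is the mirror symmetry θ(v,u)_{S₁} = θ(−conj(v), u)_{S₁} of the two-brane superpropagator.) -/
/-- The S₁-superpropagator ratio of the Poisson Sigma Model on the quadrant with
two branes: `E₁(u,v) = ((u − v)(conj u − v)) / ((conj u + v)(u + v))`. -/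
noncomputable def E₁ (u v : ℂ) : ℂ :=
  ((u - v) * ((starRingEnd ℂ) u - v)) / (((starRingEnd ℂ) u + v) * (u + v))

open ComplexConjugate

theorem Complex.arg_inv_conj (z : ℂ) : (conj z)⁻¹.arg = z.arg := by
  rw [Complex.arg_inv, Complex.arg_conj]
  split_ifs <;> first | simp_all | linarith [Complex.neg_pi_lt_arg z]

/- Reflecting `v` across the imaginary axis swaps the numerator and the denominator of the
conjugated ratio; with Lean's `x / 0 = 0` this holds for all `u, v`. -/
theorem E₁_neg_conj (u v : ℂ) : E₁ u (-conj v) = (conj (E₁ u v))⁻¹ := by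
  simp only [E₁, map_div₀, map_mul, map_sub, map_add, Complex.conj_conj, inv_div]
  ring

theorem E₁_ne_zero {u v : ℂ} (hure : 0 < u.re) (huim : 0 < u.im)
    (hvre : 0 < v.re) (hvim : 0 < v.im) (huv : u ≠ v) : E₁ u v ≠ 0 := by
  have hconj_sub : conj u - v ≠ 0 := fun h => by
    have := congrArg Complex.im h
    simp only [Complex.sub_im, Complex.conj_im, Complex.zero_im] at this
    linarith
  have hconj_add : conj u + v ≠ 0 := fun h => by
    have := congrArg Complex.re h
    simp only [Complex.add_re, Complex.conj_re, Complex.zero_re] at this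
    linarith
  have hadd : u + v ≠ 0 := fun h => by
    have := congrArg Complex.re h
    simp only [Complex.add_re, Complex.zero_re] at this
    linarith
  exact div_ne_zero (mul_ne_zero (sub_ne_zero.mpr huv) hconj_sub) (mul_ne_zero hconj_add hadd)

/-- Mirror symmetry `θ(v,u)_{S₁} = θ(−conj v, u)_{S₁}`: for `u, v` in the open
first quadrant with `u ≠ v`, `E₁(u, −conj v) · conj(E₁(u, v)) = 1`, hence the
angle map `ψ_{S₁}` is invariant under reflecting its second variable across the
imaginary axis. -/
theorem E₁_mirror_symmetry (u v : ℂ)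
    (hure : 0 < u.re) (huim : 0 < u.im)
    (hvre : 0 < v.re) (hvim : 0 < v.im) (huv : u ≠ v) :
    E₁ u (-(starRingEnd ℂ) v) * (starRingEnd ℂ) (E₁ u v) = 1 ∧
    (E₁ u (-(starRingEnd ℂ) v)).arg = (E₁ u v).arg := by
  rw [E₁_neg_conj]
  exact ⟨inv_mul_cancel₀ ((map_ne_zero _).mpr (E₁_ne_zero hure huim hvre hvim huv)),
    Complex.arg_inv_conj _⟩
end

section
/- For all u, v in the open first quadrant Q with u ≠ v one has E₂(u, conj(v)) · conj( E₂(u, v) ) = 1; consequently arg E₂(u, conj(v)) = arg E₂(u, v), i.e. the angle map ψ_{S₂} is invariant under reflecting its second variable across the real axis. (This is the mirror symmetry θ(conj(v), u)_{S₂} = θ(v, u)_{S₂} of the two-brane superpropagator.) -/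
/-- The S₂-superpropagator ratio of the Poisson Sigma Model on the quadrant with
two branes: `E₂(u,v) = ((u − v)(conj u + v)) / ((conj u − v)(u + v))`. -/
noncomputable def E₂ (u v : ℂ) : ℂ :=
  ((u - v) * ((starRingEnd ℂ) u + v)) / (((starRingEnd ℂ) u - v) * (u + v))

/-!
Conjugating `E₂ u v` swaps the numerator and the denominator of `E₂ u (conj v)`, so
`conj (E₂ u v) = (E₂ u (conj v))⁻¹` identically. On the quadrant `E₂ u (conj v)` is nonzero,
which gives the product formula, and `z ↦ (conj z)⁻¹ = z / |z|²` preserves the argument.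
-/

open ComplexConjugate

namespace Complex

theorem arg_inv_conj_s6 (z : ℂ) : (conj z)⁻¹.arg = z.arg := by
  rcases eq_or_ne z 0 with rfl | hz
  · simp
  rw [inv_def, conj_conj, normSq_conj, arg_mul_real (inv_pos.mpr (normSq_pos.mpr hz))]

end Complex

theorem conj_E₂ (u v : ℂ) : conj (E₂ u v) = (E₂ u (conj v))⁻¹ := by
  simp only [E₂, map_div₀, map_mul, map_sub, map_add, Complex.conj_conj, inv_div]

theorem E₂_conj_ne_zero {u v : ℂ} (hure : 0 < u.re) (huim : 0 < u.im)
    (hvre : 0 < v.re) (hvim : 0 < v.im) (huv : u ≠ v) : E₂ u (conj v) ≠ 0 := by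
  have h₁ : u - conj v ≠ 0 := ne_of_apply_ne Complex.im (by
    simp only [Complex.sub_im, Complex.conj_im, Complex.zero_im]; linarith)
  have h₂ : conj u + conj v ≠ 0 := ne_of_apply_ne Complex.re (by
    simp only [Complex.add_re, Complex.conj_re, Complex.zero_re]; linarith)
  have h₃ : conj u - conj v ≠ 0 := by
    rw [← map_sub, map_ne_zero]
    exact sub_ne_zero.mpr huv
  have h₄ : u + conj v ≠ 0 := ne_of_apply_ne Complex.re (by
    simp only [Complex.add_re, Complex.conj_re, Complex.zero_re]; linarith)
  exact div_ne_zero (mul_ne_zero h₁ h₂) (mul_ne_zero h₃ h₄)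

/-- Mirror symmetry `θ(conj v, u)_{S₂} = θ(v, u)_{S₂}`: for `u, v` in the open
first quadrant with `u ≠ v`, `E₂(u, conj v) · conj(E₂(u, v)) = 1`, hence the
angle map `ψ_{S₂}` is invariant under reflecting its second variable across the
real axis. -/
theorem E₂_mirror_symmetry (u v : ℂ)
    (hure : 0 < u.re) (huim : 0 < u.im)
    (hvre : 0 < v.re) (hvim : 0 < v.im) (huv : u ≠ v) :
    E₂ u ((starRingEnd ℂ) v) * (starRingEnd ℂ) (E₂ u v) = 1 ∧
    (E₂ u ((starRingEnd ℂ) v)).arg = (E₂ u v).arg := by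
  refine ⟨?_, ?_⟩
  · rw [conj_E₂, mul_inv_cancel₀ (E₂_conj_ne_zero hure huim hvre hvim huv)]
  · rw [← Complex.arg_inv_conj_s6 (E₂ u v), conj_E₂, inv_inv]
end

section
/- Let z and w lie in the open upper half-plane ℍ := {z ∈ ℂ : Im z > 0} with z ≠ w, and let u, v ∈ ℂ satisfy u² = z and v² = w. Then all denominators below are nonzero and ((u − v)·(u + v)) / ((u + conj(v))·(u − conj(v))) = (z − w)/(z − conj(w)) and ((u − v)·(u + v)) / ((conj(u) − v)·(conj(u) + v)) = (z − w)/(conj(z) − w). (Under the substitution u = √z, v = √w this identifies the single-brane superpropagator ratios E_{A₁} and E_{A₂} of the Poisson Sigma Model with Kontsevich's angle ratios, so that θ_{A₁} and θ_{A₂} are Kontsevich's propagator one-forms.) -/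
/-!
Since `u² = z` and `v² = w`, each factored denominator is a difference of squares:
`(u + v̄)(u − v̄) = z − w̄` and `(ū − v)(ū + v) = z̄ − w`, while the common numerator is `z − w`.
These denominators do not vanish because their imaginary parts are `±(Im z + Im w)`.
-/

open ComplexConjugate

namespace Complex

theorem sub_conj_ne_zero_of_im_pos {z w : ℂ} (hz : 0 < z.im) (hw : 0 < w.im) :
    z - conj w ≠ 0 := by
  intro h
  have him : z.im + w.im = 0 := by simpa using congrArg im h
  linarith

theorem conj_sub_ne_zero_of_im_pos {z w : ℂ} (hz : 0 < z.im) (hw : 0 < w.im) :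
    conj z - w ≠ 0 := by
  simpa using (map_ne_zero conj).mpr (sub_conj_ne_zero_of_im_pos hz hw)

end Complex

theorem brane_ratios_eq_kontsevich_ratios_general (z w u v : ℂ)
    (hz : 0 < z.im) (hw : 0 < w.im)
    (hu : u ^ 2 = z) (hv : v ^ 2 = w) :
    (u + (starRingEnd ℂ) v) * (u - (starRingEnd ℂ) v) ≠ 0 ∧
    z - (starRingEnd ℂ) w ≠ 0 ∧
    ((starRingEnd ℂ) u - v) * ((starRingEnd ℂ) u + v) ≠ 0 ∧
    (starRingEnd ℂ) z - w ≠ 0 ∧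
    ((u - v) * (u + v)) / ((u + (starRingEnd ℂ) v) * (u - (starRingEnd ℂ) v)) =
      (z - w) / (z - (starRingEnd ℂ) w) ∧
    ((u - v) * (u + v)) / (((starRingEnd ℂ) u - v) * ((starRingEnd ℂ) u + v)) =
      (z - w) / ((starRingEnd ℂ) z - w) := by
  have hnum : (u - v) * (u + v) = z - w := by rw [← hu, ← hv]; ring
  have hden₁ : (u + conj v) * (u - conj v) = z - conj w := by rw [← hu, ← hv, map_pow]; ring
  have hden₂ : (conj u - v) * (conj u + v) = conj z - w := by rw [← hu, ← hv, map_pow]; ring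
  have hne₁ := Complex.sub_conj_ne_zero_of_im_pos hz hw
  have hne₂ := Complex.conj_sub_ne_zero_of_im_pos hz hw
  rw [hnum, hden₁, hden₂]
  exact ⟨hne₁, hne₁, hne₂, hne₂, rfl, rfl⟩

/-- Under the substitution `u = √z`, `v = √w` mapping the upper half-plane to
the first quadrant, the single-brane superpropagator ratios `E_{A₁}` and
`E_{A₂}` of the Poisson Sigma Model coincide with Kontsevich's angle ratios
`(z − w)/(z − conj w)` and `(z − w)/(conj z − w)`, all denominators being
nonzero. -/
theorem brane_ratios_eq_kontsevich_ratios (z w u v : ℂ)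
    (hz : 0 < z.im) (hw : 0 < w.im) (hzw : z ≠ w)
    (hu : u ^ 2 = z) (hv : v ^ 2 = w) :
    (u + (starRingEnd ℂ) v) * (u - (starRingEnd ℂ) v) ≠ 0 ∧
    z - (starRingEnd ℂ) w ≠ 0 ∧
    ((starRingEnd ℂ) u - v) * ((starRingEnd ℂ) u + v) ≠ 0 ∧
    (starRingEnd ℂ) z - w ≠ 0 ∧
    ((u - v) * (u + v)) / ((u + (starRingEnd ℂ) v) * (u - (starRingEnd ℂ) v)) =
      (z - w) / (z - (starRingEnd ℂ) w) ∧
    ((u - v) * (u + v)) / (((starRingEnd ℂ) u - v) * ((starRingEnd ℂ) u + v)) =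
      (z - w) / ((starRingEnd ℂ) z - w) :=
  brane_ratios_eq_kontsevich_ratios_general z w u v hz hw hu hv
end
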